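/- (Expansion of a ${}_2\varphi_1$ in shifted arguments, identity (630).) Let $0<q<1$, $a,b,\sigma,r$ with $0<r<1$, $|ab|<1$, $|abr|<1$, $y \in \mathbb{C}\setminus\mathbb{R}_{>0}$, and $l \in \mathbb{Z}$. Then ${}_2\varphi_1\!\left({b\sigma, b/\sigma \atop abr}; q, -yq^l\right) = \frac{(ab;q)_\infty (r;q)_\infty}{(q;q)_\infty (abr;q)_\infty} \sum_{k=0}^\infty (ab)^k \frac{(q^{k+1};q)_\infty}{(rq^k;q)_\infty}\, {}_2\varphi_1\!\left({b\sigma, b/\sigma \atop ab}; q, -yq^{l+k}\right)$, where the ${}_2\varphi_1$-series are understood via analytic continuation when necessary. -/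

import Mathlib

/-- Infinite q-shifted factorial `(c;q)_∞`. -/
noncomputable def qPinf (q : ℝ) (c : ℂ) : ℂ := ∏' i : ℕ, (1 - c * (q : ℂ) ^ i)

/-- Finite q-shifted factorial `(c;q)_j`. -/
noncomputable def qP (q : ℝ) (c : ℂ) (j : ℕ) : ℂ :=
  ∏ i ∈ Finset.range j, (1 - c * (q : ℂ) ^ i)

/-!
By the `q`-binomial theorem `∑ₖ (r;q)ₖ/(q;q)ₖ zᵏ = (rz;q)_∞/(z;q)_∞`, applied at `z = ab qʲ`,
the ratio `(ab;q)ⱼ/(abr;q)ⱼ` is a power series in `ab qʲ` with coefficients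
`(q^{k+1};q)_∞/(rqᵏ;q)_∞` (up to the constant in front). Inserting this into the series of `G`
and interchanging the absolutely convergent double sum proves the identity on the unit disc.
Since `‖ab‖ < 1` and multiplication by `qᵏ ∈ [0, 1]` preserves the star-shaped domain
`ℂ ∖ [1, ∞)`, the right-hand side converges locally uniformly there, so it is analytic and the
identity theorem extends the equality.
-/

open Filter Topology Metric

section QPochhammer

variable {q : ℝ}

lemma norm_ofReal_lt_one (hq : |q| < 1) : ‖(q : ℂ)‖ < 1 := by
  simpa using hq

lemma norm_mul_ofReal_pow_le (hq : |q| ≤ 1) (c : ℂ) (i : ℕ) : ‖c * (q : ℂ) ^ i‖ ≤ ‖c‖ := by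
  rw [norm_mul, norm_pow, Complex.norm_real, Real.norm_eq_abs]
  exact mul_le_of_le_one_right (norm_nonneg c) (pow_le_one₀ (abs_nonneg q) hq)

lemma summable_norm_mul_ofReal_pow (hq : |q| < 1) (c : ℂ) :
    Summable fun i : ℕ => ‖c * (q : ℂ) ^ i‖ := by
  simpa [norm_mul, norm_pow] using (summable_geometric_of_lt_one (abs_nonneg q) hq).mul_left ‖c‖

lemma hasProd_qPinf (hq : |q| < 1) (c : ℂ) :
    HasProd (fun i : ℕ => 1 - c * (q : ℂ) ^ i) (qPinf q c) := by
  have h := multipliable_one_add_of_summable (f := fun i : ℕ => -(c * (q : ℂ) ^ i))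
    (by simpa using summable_norm_mul_ofReal_pow hq c)
  simp only [← sub_eq_add_neg] at h
  exact h.hasProd

lemma tendsto_qP (hq : |q| < 1) (c : ℂ) : Tendsto (qP q c) atTop (𝓝 (qPinf q c)) :=
  (hasProd_qPinf hq c).tendsto_prod_nat

lemma qP_succ (c : ℂ) (k : ℕ) : qP q c (k + 1) = qP q c k * (1 - c * (q : ℂ) ^ k) :=
  Finset.prod_range_succ _ k

lemma one_sub_mul_ofReal_pow_ne_zero (hq : |q| ≤ 1) {c : ℂ} (hc : ‖c‖ < 1) (i : ℕ) :
    1 - c * (q : ℂ) ^ i ≠ 0 := by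
  rw [sub_ne_zero]
  intro h
  have := (norm_mul_ofReal_pow_le hq c i).trans_lt hc
  rw [← h, norm_one] at this
  exact this.false

lemma qP_ne_zero (hq : |q| ≤ 1) {c : ℂ} (hc : ‖c‖ < 1) (j : ℕ) : qP q c j ≠ 0 :=
  Finset.prod_ne_zero_iff.2 fun i _ => one_sub_mul_ofReal_pow_ne_zero hq hc i

lemma qPinf_ne_zero (hq : |q| < 1) {c : ℂ} (hc : ‖c‖ < 1) : qPinf q c ≠ 0 := by
  have h := tprod_one_add_ne_zero_of_summable (f := fun i : ℕ => -(c * (q : ℂ) ^ i))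
    (fun i => by simpa [← sub_eq_add_neg] using one_sub_mul_ofReal_pow_ne_zero hq.le hc i)
    (by simpa using summable_norm_mul_ofReal_pow hq c)
  simpa [qPinf, ← sub_eq_add_neg] using h

lemma qPinf_eq_qP_mul_qPinf (hq : |q| < 1) (c : ℂ) (k : ℕ) :
    qPinf q c = qP q c k * qPinf q (c * (q : ℂ) ^ k) := by
  have hshift : (fun i : ℕ => 1 - c * (q : ℂ) ^ (i + k)) =
      fun i : ℕ => 1 - c * (q : ℂ) ^ k * (q : ℂ) ^ i := by
    ext i; ring
  have hm : Multipliable fun i : ℕ => 1 - c * (q : ℂ) ^ (i + k) := by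
    rw [hshift]; exact (hasProd_qPinf hq _).multipliable
  unfold qPinf qP
  rw [← hm.prod_mul_tprod_nat_mul' (f := fun i : ℕ => 1 - c * (q : ℂ) ^ i), hshift]

lemma continuous_qPinf (hq : |q| < 1) : Continuous (qPinf q) := by
  refine continuous_iff_continuousAt.2 fun c => ?_
  have hbound : ∀ i : ℕ, ∀ w ∈ closedBall c 1, ‖-(w * (q : ℂ) ^ i)‖ ≤ (‖c‖ + 1) * |q| ^ i := by
    intro i w hw
    rw [norm_neg, norm_mul, norm_pow, Complex.norm_real, Real.norm_eq_abs]
    gcongr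
    simpa [dist_eq_norm] using norm_le_norm_add_norm_sub' w c |>.trans (by
      rw [mem_closedBall, dist_eq_norm] at hw; linarith)
  have hU := Summable.hasProdUniformlyOn_nat_one_add (isCompact_closedBall c 1)
    ((summable_geometric_of_lt_one (abs_nonneg q) hq).mul_left (‖c‖ + 1))
    (Eventually.of_forall hbound) (fun i => by fun_prop)
  have hcont := hU.tendstoUniformlyOn_finsetRange.continuousOn
    (Frequently.of_forall fun n => by fun_prop)
  simp only [← sub_eq_add_neg] at hcont
  exact hcont.continuousAt (closedBall_mem_nhds c one_pos)

end QPochhammer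

section BoundedCoefficients

lemma exists_norm_le_of_tendsto {u : ℕ → ℂ} {x : ℂ} (h : Tendsto u atTop (𝓝 x)) :
    ∃ B, ∀ k, ‖u k‖ ≤ B :=
  (isBounded_iff_forall_norm_le.1 (isBounded_range_of_tendsto u h)).imp
    fun _ hB k => hB _ ⟨k, rfl⟩

variable {c : ℕ → ℂ} {B : ℝ}

lemma summable_norm_mul_pow_of_norm_le (hB : ∀ k, ‖c k‖ ≤ B) {w : ℂ} (hw : ‖w‖ < 1) :
    Summable fun k => ‖c k * w ^ k‖ :=
  .of_nonneg_of_le (fun k => norm_nonneg _) (fun k => by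
      rw [norm_mul, norm_pow]
      exact mul_le_mul_of_nonneg_right (hB k) (by positivity))
    ((summable_geometric_of_lt_one (norm_nonneg w) hw).mul_left B)

lemma continuousAt_tsum_mul_pow_of_norm_le (hB : ∀ k, ‖c k‖ ≤ B) :
    ContinuousAt (fun w => ∑' k, c k * w ^ k) 0 := by
  have hcont : ContinuousOn (fun w => ∑' k, c k * w ^ k) (closedBall 0 (1 / 2)) :=
    continuousOn_tsum (fun k => by fun_prop)
      ((summable_geometric_two).mul_left B) fun k w hw => by
        rw [mem_closedBall, dist_zero_right] at hw
        rw [norm_mul, norm_pow]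
        exact mul_le_mul (hB k) (pow_le_pow_left₀ (norm_nonneg w) hw k) (by positivity)
          ((norm_nonneg _).trans (hB 0))
  exact hcont.continuousAt (closedBall_mem_nhds 0 (by norm_num))

end BoundedCoefficients

section QBinomial

variable {q : ℝ}

noncomputable def qBinomCoeff (q : ℝ) (α : ℂ) (k : ℕ) : ℂ := qP q α k / qP q (q : ℂ) k

lemma qBinomCoeff_succ_mul (hq : |q| < 1) (α : ℂ) (k : ℕ) :
    qBinomCoeff q α (k + 1) * (1 - (q : ℂ) ^ (k + 1)) =
      qBinomCoeff q α k * (1 - α * (q : ℂ) ^ k) := by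
  have hne := one_sub_mul_ofReal_pow_ne_zero hq.le (norm_ofReal_lt_one hq) k
  rw [← pow_succ'] at hne
  have hqP := qP_ne_zero hq.le (norm_ofReal_lt_one hq) k
  rw [qBinomCoeff, qBinomCoeff, qP_succ, qP_succ, ← pow_succ']
  field_simp

lemma tendsto_qBinomCoeff (hq : |q| < 1) (α : ℂ) :
    Tendsto (qBinomCoeff q α) atTop (𝓝 (qPinf q α / qPinf q (q : ℂ))) :=
  (tendsto_qP hq α).div (tendsto_qP hq _) (qPinf_ne_zero hq (norm_ofReal_lt_one hq))

lemma one_sub_mul_tsum_qBinomCoeff (hq : |q| < 1) (α : ℂ) {w : ℂ} (hw : ‖w‖ < 1) :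
    (1 - w) * ∑' k, qBinomCoeff q α k * w ^ k =
      (1 - α * w) * ∑' k, qBinomCoeff q α k * ((q : ℂ) * w) ^ k := by
  obtain ⟨B, hB⟩ := exists_norm_le_of_tendsto (tendsto_qBinomCoeff hq α)
  have hs₁ := (summable_norm_mul_pow_of_norm_le hB hw).of_norm
  have hs₂ := (summable_norm_mul_pow_of_norm_le hB (w := (q : ℂ) * w)
    (by simpa [mul_comm] using (norm_mul_ofReal_pow_le hq.le w 1).trans_lt hw)).of_norm
  -- both sides have the same coefficients, by `qBinomCoeff_succ_mul`
  have key : ∑' k, qBinomCoeff q α k * w ^ k - ∑' k, qBinomCoeff q α k * ((q : ℂ) * w) ^ k =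
      w * ∑' k, qBinomCoeff q α k * w ^ k -
        α * w * ∑' k, qBinomCoeff q α k * ((q : ℂ) * w) ^ k := by
    rw [← hs₁.tsum_sub hs₂, (hs₁.sub hs₂).tsum_eq_zero_add, ← tsum_mul_left, ← tsum_mul_left,
      ← (hs₁.mul_left w).tsum_sub (hs₂.mul_left _)]
    simp only [pow_zero, sub_self, zero_add]
    refine tsum_congr fun k => ?_
    linear_combination w ^ (k + 1) * qBinomCoeff_succ_mul hq α k
  linear_combination key

theorem tsum_qBinomCoeff_mul_pow (hq : |q| < 1) (α : ℂ) {z : ℂ} (hz : ‖z‖ < 1) :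
    ∑' k, qBinomCoeff q α k * z ^ k = qPinf q (α * z) / qPinf q z := by
  obtain ⟨B, hB⟩ := exists_norm_le_of_tendsto (tendsto_qBinomCoeff hq α)
  set P : ℂ → ℂ := fun w => qPinf q w * ∑' k, qBinomCoeff q α k * w ^ k - qPinf q (α * w)
    with hP
  have hqPinf_succ : ∀ c : ℂ, qPinf q c = (1 - c) * qPinf q ((q : ℂ) * c) := fun c => by
    simpa [qP, mul_comm] using qPinf_eq_qP_mul_qPinf hq c 1
  have hstep : ∀ w : ℂ, ‖w‖ < 1 → P w = (1 - α * w) * P ((q : ℂ) * w) := fun w hw => by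
    simp only [hP]
    rw [hqPinf_succ w, hqPinf_succ (α * w), mul_left_comm (q : ℂ) α]
    linear_combination qPinf q ((q : ℂ) * w) * one_sub_mul_tsum_qBinomCoeff hq α hw
  have hiter : ∀ n : ℕ, P z = qP q (α * z) n * P ((q : ℂ) ^ n * z) := fun n => by
    induction n with
    | zero => simp [qP]
    | succ n ih =>
      have hn : ‖(q : ℂ) ^ n * z‖ < 1 := by
        simpa [mul_comm] using (norm_mul_ofReal_pow_le hq.le z n).trans_lt hz
      rw [ih, hstep _ hn, qP_succ]
      ring_nf
  have hP0 : P 0 = 0 := by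
    simp only [hP, mul_zero]
    rw [tsum_eq_single 0 fun k hk => by simp [hk]]
    simp [qPinf, qBinomCoeff, qP]
  have hlim : Tendsto (fun n : ℕ => qP q (α * z) n * P ((q : ℂ) ^ n * z)) atTop
      (𝓝 (qPinf q (α * z) * P 0)) := by
    refine (tendsto_qP hq _).mul (ContinuousAt.tendsto ?_ |>.comp ?_)
    · exact ((continuous_qPinf hq).continuousAt.mul (continuousAt_tsum_mul_pow_of_norm_le hB)).sub
        ((continuous_qPinf hq).comp (continuous_const_mul α)).continuousAt
    · simpa using (tendsto_pow_atTop_nhds_zero_of_norm_lt_one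
        (norm_ofReal_lt_one hq)).mul_const z
  rw [hP0, mul_zero, ← funext hiter] at hlim
  rw [eq_div_iff (qPinf_ne_zero hq hz), mul_comm]
  exact sub_eq_zero.1 (tendsto_nhds_unique tendsto_const_nhds hlim)

end QBinomial

section Expansion

variable {q : ℝ}

noncomputable def phiCoeff (q : ℝ) (α β γ : ℂ) (j : ℕ) : ℂ :=
  (qP q α j * qP q β j) / (qP q (q : ℂ) j * qP q γ j)

noncomputable def expansionWeight (q : ℝ) (r : ℂ) (k : ℕ) : ℂ :=
  qPinf q ((q : ℂ) ^ (k + 1)) / qPinf q (r * (q : ℂ) ^ k)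

lemma tendsto_phiCoeff (hq : |q| < 1) (α β : ℂ) {γ : ℂ} (hγ : ‖γ‖ < 1) :
    Tendsto (phiCoeff q α β γ) atTop
      (𝓝 ((qPinf q α * qPinf q β) / (qPinf q (q : ℂ) * qPinf q γ))) :=
  ((tendsto_qP hq α).mul (tendsto_qP hq β)).div ((tendsto_qP hq _).mul (tendsto_qP hq γ))
    (mul_ne_zero (qPinf_ne_zero hq (norm_ofReal_lt_one hq)) (qPinf_ne_zero hq hγ))

lemma phiCoeff_eq_mul_qP_div (α β : ℂ) {γ : ℂ} (δ : ℂ) {j : ℕ} (hγ : qP q γ j ≠ 0) :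
    phiCoeff q α β δ j = phiCoeff q α β γ j * (qP q γ j / qP q δ j) := by
  rw [phiCoeff, phiCoeff, div_mul_div_comm, mul_right_comm (qP q (q : ℂ) j),
    mul_div_mul_right _ _ hγ]

lemma expansionWeight_eq (hq : |q| < 1) {r : ℂ} (hr : ‖r‖ < 1) (k : ℕ) :
    expansionWeight q r k = qPinf q (q : ℂ) / qPinf q r * qBinomCoeff q r k := by
  have := qP_ne_zero hq.le (norm_ofReal_lt_one hq) k
  have := qP_ne_zero hq.le hr k
  have := qPinf_ne_zero hq ((norm_mul_ofReal_pow_le hq.le r k).trans_lt hr)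
  rw [expansionWeight, qPinf_eq_qP_mul_qPinf hq (q : ℂ) k, qPinf_eq_qP_mul_qPinf hq r k,
    qBinomCoeff, ← pow_succ']
  field_simp

lemma exists_norm_expansionWeight_le (hq : |q| < 1) {r : ℂ} (hr : ‖r‖ < 1) :
    ∃ B, ∀ k, ‖expansionWeight q r k‖ ≤ B :=
  exists_norm_le_of_tendsto (((tendsto_qBinomCoeff hq r).const_mul _).congr
    fun k => (expansionWeight_eq hq hr k).symm)

lemma mul_tsum_expansionWeight_mul_pow (hq : |q| < 1) {γ r : ℂ} (hγ : ‖γ‖ < 1)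
    (hr : ‖r‖ < 1) (j : ℕ) :
    qPinf q γ * qPinf q r / (qPinf q (q : ℂ) * qPinf q (γ * r)) *
        ∑' k, expansionWeight q r k * (γ * (q : ℂ) ^ j) ^ k =
      qP q γ j / qP q (γ * r) j := by
  have hγr : ‖γ * r‖ < 1 := by
    rw [norm_mul]; exact (mul_lt_one_of_nonneg_of_lt_one_left (norm_nonneg γ) hγ hr.le)
  have hz : ‖γ * (q : ℂ) ^ j‖ < 1 := (norm_mul_ofReal_pow_le hq.le γ j).trans_lt hγ
  have hrz : ‖r * (γ * (q : ℂ) ^ j)‖ < 1 := by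
    rw [norm_mul]; exact mul_lt_one_of_nonneg_of_lt_one_left (norm_nonneg r) hr hz.le
  have := qPinf_ne_zero hq (norm_ofReal_lt_one hq)
  have := qPinf_ne_zero hq hr
  have := qPinf_ne_zero hq hz
  have := qPinf_ne_zero hq hrz
  have := qP_ne_zero hq.le hγ j
  have := qP_ne_zero hq.le hγr j
  simp_rw [expansionWeight_eq hq hr, mul_assoc, tsum_mul_left, tsum_qBinomCoeff_mul_pow hq r hz]
  rw [qPinf_eq_qP_mul_qPinf hq γ j, qPinf_eq_qP_mul_qPinf hq (γ * r) j,
    show γ * r * (q : ℂ) ^ j = r * (γ * (q : ℂ) ^ j) by ring]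
  generalize qPinf q (r * (γ * (q : ℂ) ^ j)) = P at *
  field_simp

theorem tsum_phiCoeff_mul_pow_eq (hq : |q| < 1) (α β : ℂ) {γ r : ℂ} (hγ : ‖γ‖ < 1)
    (hr : ‖r‖ < 1) {w : ℂ} (hw : ‖w‖ < 1) :
    ∑' j, phiCoeff q α β (γ * r) j * w ^ j =
      qPinf q γ * qPinf q r / (qPinf q (q : ℂ) * qPinf q (γ * r)) *
        ∑' k, γ ^ k * expansionWeight q r k * ∑' j, phiCoeff q α β γ j * (w * (q : ℂ) ^ k) ^ j := by
  obtain ⟨Bc, hBc⟩ := exists_norm_le_of_tendsto (tendsto_phiCoeff hq α β hγ)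
  obtain ⟨Bρ, hBρ⟩ := exists_norm_expansionWeight_le hq hr
  have hBc₀ : 0 ≤ Bc := (norm_nonneg _).trans (hBc 0)
  have hBρ₀ : 0 ≤ Bρ := (norm_nonneg _).trans (hBρ 0)
  set t : ℕ → ℕ → ℂ := fun k j =>
    γ ^ k * expansionWeight q r k * (phiCoeff q α β γ j * (w * (q : ℂ) ^ k) ^ j)
  have ht : Summable (Function.uncurry t) := by
    refine .of_norm_bounded (g := fun p : ℕ × ℕ => (‖γ‖ ^ p.1 * Bρ) * (Bc * ‖w‖ ^ p.2))
      (Summable.mul_of_nonneg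
        ((summable_geometric_of_lt_one (norm_nonneg γ) hγ).mul_right Bρ)
        ((summable_geometric_of_lt_one (norm_nonneg w) hw).mul_left Bc)
        (fun k => by positivity) (fun j => by positivity)) ?_
    rintro ⟨k, j⟩
    have hwk : ‖w‖ * |q| ^ k ≤ ‖w‖ := by
      simpa [norm_mul, norm_pow] using norm_mul_ofReal_pow_le hq.le w k
    simp only [Function.uncurry_apply_pair, t, norm_mul, norm_pow, Complex.norm_real,
      Real.norm_eq_abs]
    gcongr
    exacts [hBρ k, hBc j]
  calc ∑' j, phiCoeff q α β (γ * r) j * w ^ j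
      = ∑' j, qPinf q γ * qPinf q r / (qPinf q (q : ℂ) * qPinf q (γ * r)) * ∑' k, t k j := by
        refine tsum_congr fun j => ?_
        have ht_j : ∀ k, t k j =
            phiCoeff q α β γ j * w ^ j * (expansionWeight q r k * (γ * (q : ℂ) ^ j) ^ k) :=
          fun k => by simp only [t]; ring
        rw [tsum_congr ht_j, tsum_mul_left, phiCoeff_eq_mul_qP_div α β _ (qP_ne_zero hq.le hγ j),
          ← mul_tsum_expansionWeight_mul_pow hq hγ hr j]
        ring
    _ = _ := by
        rw [tsum_mul_left, ht.tsum_comm]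
        simp only [t, tsum_mul_left]

end Expansion

section AnalyticContinuation

lemma isOpen_setOf_im_ne_zero_or_re_lt_one : IsOpen {w : ℂ | w.im ≠ 0 ∨ w.re < 1} :=
  (isOpen_ne_fun Complex.continuous_im continuous_const).union
    (isOpen_lt Complex.continuous_re continuous_const)

lemma starConvex_setOf_im_ne_zero_or_re_lt_one :
    StarConvex ℝ 0 {w : ℂ | w.im ≠ 0 ∨ w.re < 1} := by
  intro w hw a b ha hb hab
  simp only [smul_zero, zero_add, Set.mem_ofPred_eq, Complex.smul_re, Complex.smul_im,
    smul_eq_mul]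
  rcases hb.eq_or_lt with rfl | hb
  · simp
  · rcases hw with hw | hw
    · exact .inl (mul_ne_zero hb.ne' hw)
    · exact .inr (by nlinarith)

theorem analyticOnNhd_tsum_mul_comp_mul_ofReal {U : Set ℂ} (hUo : IsOpen U)
    (hUs : StarConvex ℝ 0 U) {F : ℂ → ℂ} (hF : AnalyticOnNhd ℂ F U) {e : ℕ → ℂ}
    (he : Summable fun k => ‖e k‖) {s : ℕ → ℝ} (hs : ∀ k, s k ∈ Set.Icc (0 : ℝ) 1) :
    AnalyticOnNhd ℂ (fun w => ∑' k, e k * F (w * s k)) U := by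
  have hmem : ∀ w ∈ U, ∀ t ∈ Set.Icc (0 : ℝ) 1, w * (t : ℂ) ∈ U := fun w hw t ht => by
    simpa [Complex.real_smul, mul_comm] using hUs.smul_mem hw ht.1 ht.2
  refine DifferentiableOn.analyticOnNhd ?_ hUo
  refine TendstoLocallyUniformlyOn.differentiableOn
    (F := fun (T : Finset ℕ) w => ∑ k ∈ T, e k * F (w * s k)) (φ := atTop) ?_
    (Eventually.of_forall fun T => ?_) hUo
  · rw [tendstoLocallyUniformlyOn_iff_forall_isCompact hUo]
    intro K hKU hK
    have hK' : IsCompact ((fun p : ℂ × ℝ => p.1 * p.2) '' (K ×ˢ Set.Icc 0 1)) :=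
      (hK.prod isCompact_Icc).image (by fun_prop)
    obtain ⟨M, hM⟩ := hK'.exists_bound_of_continuousOn (hF.continuousOn.mono
      (by rintro _ ⟨⟨w, t⟩, ⟨hw, ht⟩, rfl⟩; exact hmem w (hKU hw) t ht))
    exact tendstoUniformlyOn_tsum (he.mul_right M) fun k w hw => by
      rw [norm_mul]
      exact mul_le_mul_of_nonneg_left (hM _ ⟨(w, s k), ⟨hw, hs k⟩, rfl⟩) (norm_nonneg _)
  · exact DifferentiableOn.fun_sum fun k _ =>
      (hF.differentiableOn.comp (by fun_prop) fun w hw => hmem w hw _ (hs k)).const_mul _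

end AnalyticContinuation

theorem expansion_630_general (q : ℝ) (hq0 : 0 < q) (hq1 : q < 1)
    (r : ℝ) (hr0 : 0 < r) (hr1 : r < 1)
    (a b σ : ℂ)
    (hab : ‖a * b‖ < 1)
    (y : ℂ) (l : ℤ)
    (hdom : ∀ k : ℕ, (-(y) * (q : ℂ) ^ (l + k)).im ≠ 0 ∨ (-(y) * (q : ℂ) ^ (l + k)).re < 1)
    (F G : ℂ → ℂ)
    (hFa : AnalyticOnNhd ℂ F {w : ℂ | w.im ≠ 0 ∨ w.re < 1})
    (hGa : AnalyticOnNhd ℂ G {w : ℂ | w.im ≠ 0 ∨ w.re < 1})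
    (hFs : ∀ w : ℂ, ‖w‖ < 1 → F w = ∑' j : ℕ,
      (qP q (b * σ) j * qP q (b / σ) j) /
        (qP q (q : ℂ) j * qP q (a * b) j) * w ^ j)
    (hGs : ∀ w : ℂ, ‖w‖ < 1 → G w = ∑' j : ℕ,
      (qP q (b * σ) j * qP q (b / σ) j) /
        (qP q (q : ℂ) j * qP q (a * b * (r : ℂ)) j) * w ^ j) :
    G (-(y) * (q : ℂ) ^ l) =
      (qPinf q (a * b) * qPinf q (r : ℂ)) / (qPinf q (q : ℂ) * qPinf q (a * b * (r : ℂ))) *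
        ∑' k : ℕ, (a * b) ^ k *
          (qPinf q ((q : ℂ) ^ (k + 1)) / qPinf q ((r : ℂ) * (q : ℂ) ^ k)) *
          F (-(y) * (q : ℂ) ^ (l + k)) := by
  have hq : |q| < 1 := abs_lt.2 ⟨by linarith, hq1⟩
  have hr : ‖(r : ℂ)‖ < 1 := by simpa [abs_of_pos hr0] using hr1
  obtain ⟨B, hB⟩ := exists_norm_expansionWeight_le hq hr
  have hRHS : AnalyticOnNhd ℂ (fun w => ∑' k, (a * b) ^ k * expansionWeight q r k *
      F (w * (q : ℂ) ^ k)) {w : ℂ | w.im ≠ 0 ∨ w.re < 1} := by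
    simpa using analyticOnNhd_tsum_mul_comp_mul_ofReal isOpen_setOf_im_ne_zero_or_re_lt_one
      starConvex_setOf_im_ne_zero_or_re_lt_one hFa
      (by simpa only [mul_comm] using summable_norm_mul_pow_of_norm_le hB hab)
      (s := (q ^ ·)) fun k => ⟨by positivity, pow_le_one₀ hq0.le hq1.le⟩
  have hnear : G =ᶠ[𝓝 0] fun w => (qPinf q (a * b) * qPinf q (r : ℂ)) /
      (qPinf q (q : ℂ) * qPinf q (a * b * (r : ℂ))) *
        ∑' k, (a * b) ^ k * expansionWeight q r k * F (w * (q : ℂ) ^ k) := by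
    filter_upwards [ball_mem_nhds (0 : ℂ) one_pos] with w hw
    rw [mem_ball_zero_iff] at hw
    have hFk : ∀ k : ℕ, F (w * (q : ℂ) ^ k) =
        ∑' j, phiCoeff q (b * σ) (b / σ) (a * b) j * (w * (q : ℂ) ^ k) ^ j :=
      fun k => hFs _ ((norm_mul_ofReal_pow_le hq.le w k).trans_lt hw)
    simp only [hFk]
    exact (hGs w hw).trans (tsum_phiCoeff_mul_pow_eq hq _ _ hab hr hw)
  have hpoint := hdom 0
  rw [Nat.cast_zero, add_zero] at hpoint
  have hzero : (0 : ℂ) ∈ {w : ℂ | w.im ≠ 0 ∨ w.re < 1} := by simp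
  rw [hGa.eqOn_of_preconnected_of_eventuallyEq (analyticOnNhd_const.mul hRHS)
    (starConvex_setOf_im_ne_zero_or_re_lt_one.isPathConnected hzero).isConnected.isPreconnected
    hzero hnear hpoint]
  beta_reduce
  congr 1
  refine tsum_congr fun k => ?_
  simp only [expansionWeight, zpow_add₀ (Complex.ofReal_ne_zero.2 hq0.ne'), zpow_natCast,
    mul_assoc]

/-- Expansion of a `₂φ₁` with lower parameter `abr` in terms of `₂φ₁`'s with lower
parameter `ab` at shifted arguments (identity (630)).  Here `F` (resp. `G`) denotes the
one-valued analytic continuation of `₂φ₁(bσ, b/σ; ab; q, ·)` (resp.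
`₂φ₁(bσ, b/σ; abr; q, ·)`) to `ℂ \ ℝ_{≥1}`. -/
theorem expansion_630 (q : ℝ) (hq0 : 0 < q) (hq1 : q < 1)
    (r : ℝ) (hr0 : 0 < r) (hr1 : r < 1)
    (a b σ : ℂ) (ha : a ≠ 0) (hb : b ≠ 0) (hσ : σ ≠ 0)
    (hab : ‖a * b‖ < 1) (habr : ‖a * b * (r : ℂ)‖ < 1)
    (y : ℂ) (hy : ∀ t : ℝ, 0 < t → y ≠ (t : ℂ)) (l : ℤ)
    (hdom : ∀ k : ℕ, (-(y) * (q : ℂ) ^ (l + k)).im ≠ 0 ∨ (-(y) * (q : ℂ) ^ (l + k)).re < 1)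
    (F G : ℂ → ℂ)
    (hFa : AnalyticOnNhd ℂ F {w : ℂ | w.im ≠ 0 ∨ w.re < 1})
    (hGa : AnalyticOnNhd ℂ G {w : ℂ | w.im ≠ 0 ∨ w.re < 1})
    (hFs : ∀ w : ℂ, ‖w‖ < 1 → F w = ∑' j : ℕ,
      (qP q (b * σ) j * qP q (b / σ) j) /
        (qP q (q : ℂ) j * qP q (a * b) j) * w ^ j)
    (hGs : ∀ w : ℂ, ‖w‖ < 1 → G w = ∑' j : ℕ,
      (qP q (b * σ) j * qP q (b / σ) j) /
        (qP q (q : ℂ) j * qP q (a * b * (r : ℂ)) j) * w ^ j) :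
    G (-(y) * (q : ℂ) ^ l) =
      (qPinf q (a * b) * qPinf q (r : ℂ)) / (qPinf q (q : ℂ) * qPinf q (a * b * (r : ℂ))) *
        ∑' k : ℕ, (a * b) ^ k *
          (qPinf q ((q : ℂ) ^ (k + 1)) / qPinf q ((r : ℂ) * (q : ℂ) ^ k)) *
          F (-(y) * (q : ℂ) ^ (l + k)) :=
  expansion_630_general q hq0 hq1 r hr0 hr1 a b σ hab y l hdom F G hFa hGa hFs hGs
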